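/- Let T be an increasing gapless tableau of two-row shape λ with maximum entry m, and let i ∈ {1,...,m-1} be such that i is not a descent of T (i.e., the topmost i does not lie strictly above the bottommost i+1). Then in the standard Young tableau Φ_{λ;m}(T), the entry i lies strictly to the left of i+1, and hence π_i · Φ_{λ;m}(T) = Φ_{λ;m}(T) under Searles' 0-Hecke action. -/

import Mathlib

/-- A two-row tableau, given by its two rows (lists of entries). -/
structure TwoRowT where
  r1 : List ℕ
  r2 : List ℕ
deriving DecidableEq

/-- A "hook-plus" tableau: two rows together with the part of the first
column lying below the second row. -/
structure HookT where
  r1 : List ℕ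
  r2 : List ℕ
  col : List ℕ
deriving DecidableEq

/-- `T` is an increasing gapless tableau of shape `(l1,l2)` with maximum entry `m`. -/
def IsIGLT (l1 l2 m : ℕ) (T : TwoRowT) : Prop :=
  T.r1.length = l1 ∧ T.r2.length = l2 ∧
  T.r1.Chain' (· < ·) ∧ T.r2.Chain' (· < ·) ∧
  (∀ j, j < l2 → T.r1.getD j 0 < T.r2.getD j 0) ∧
  (∀ x ∈ T.r1, 1 ≤ x ∧ x ≤ m) ∧ (∀ x ∈ T.r2, 1 ≤ x ∧ x ≤ m) ∧
  (∀ k, 1 ≤ k → k ≤ m → k ∈ T.r1 ∨ k ∈ T.r2) ∧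
  (m ∈ T.r1 ∨ m ∈ T.r2)

/-- The set `A` of repeated entries of a two-row increasing tableau. -/
def setA (T : TwoRowT) : List ℕ := T.r1.filter (fun x => x ∈ T.r2)

/-- The set `B`: entries of the second row immediately to the right of an element of `A`. -/
def setB (T : TwoRowT) : List ℕ :=
  (T.r2.zip T.r2.tail).filterMap (fun p => if p.1 ∈ setA T then some p.2 else none)

/-- Pechenik's map `Φ_{λ;m}`. -/
def Phi (T : TwoRowT) : HookT :=
  ⟨T.r1.filter (fun x => x ∉ setA T),
   T.r2.filter (fun x => x ∉ setB T),
   List.insertionSort (· ≤ ·) (setB T)⟩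

/-- The shape of a hook-plus tableau, as a list. -/
def shapeOf (S : HookT) : List ℕ :=
  S.r1.length :: S.r2.length :: List.replicate S.col.length 1

/-- `S` is a standard Young tableau with entries `1,...,m`. -/
def IsSYTHook (m : ℕ) (S : HookT) : Prop :=
  S.r1.Chain' (· < ·) ∧ S.r2.Chain' (· < ·) ∧
  ((S.r1.take 1) ++ (S.r2.take 1) ++ S.col).Chain' (· < ·) ∧
  (∀ j, j < S.r2.length → S.r1.getD j 0 < S.r2.getD j 0) ∧
  S.r2.length ≤ S.r1.length ∧
  (S.col ≠ [] → S.r2 ≠ []) ∧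
  (S.r1 ++ S.r2 ++ S.col).Perm (List.range' 1 m)

/-- The shape `λ_m^{(1)} = (λ₁-k, λ₂-k, 1^k)`. -/
def lamShape1 (l1 l2 k : ℕ) : List ℕ := [l1 - k, l2 - k] ++ List.replicate k 1

/-- The shape `λ_m^{(2)} = (λ₁-k, λ₂-k+1, 1^(k-1))`. -/
def lamShape2 (l1 l2 k : ℕ) : List ℕ := [l1 - k, l2 - k + 1] ++ List.replicate (k - 1) 1

/-- The set `Par(λ;m)` of shapes occurring in Pechenik's expansion. -/
def ParSet (l1 l2 n m : ℕ) : Set (List ℕ) :=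
  {s | (n - m + 1 < l2 ∨ m = n) ∧ s = lamShape1 l1 l2 (n - m)} ∪
  {s | l1 ≠ l2 ∧ m < n ∧ n - m < l2 ∧ s = lamShape2 l1 l2 (n - m)}

/-- Row index (1-based) of the entry `x` in a hook-plus tableau. -/
def rowIdx (S : HookT) (x : ℕ) : ℕ :=
  if x ∈ S.r1 then 1 else if x ∈ S.r2 then 2 else 3 + S.col.idxOf x

/-- Column index (0-based) of the entry `x` in a hook-plus tableau. -/
def colIdx (S : HookT) (x : ℕ) : ℕ :=
  if x ∈ S.r1 then S.r1.idxOf x else if x ∈ S.r2 then S.r2.idxOf x else 0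

/-- Descent set of an increasing gapless two-row tableau with max entry `m`. -/
def desT (m : ℕ) (T : TwoRowT) : Finset ℕ :=
  (Finset.Ioo 0 m).filter (fun i => i ∈ T.r1 ∧ i + 1 ∈ T.r2)

/-- Descent set of a standard Young tableau with entries `1,...,m`. -/
def desS (m : ℕ) (S : HookT) : Finset ℕ :=
  (Finset.Ioo 0 m).filter (fun i => rowIdx S i < rowIdx S (i + 1))

def swapVal (i j x : ℕ) : ℕ := if x = i then j else if x = j then i else x

/-- Swap the entries `i` and `j` in a two-row tableau. -/
def twoRowSwap (i j : ℕ) (T : TwoRowT) : TwoRowT :=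
  ⟨T.r1.map (swapVal i j), T.r2.map (swapVal i j)⟩

/-- Swap the entries `i` and `j` in a hook-plus tableau. -/
def hookSwap (i j : ℕ) (S : HookT) : HookT :=
  ⟨S.r1.map (swapVal i j), S.r2.map (swapVal i j), S.col.map (swapVal i j)⟩

/-- Searles' 0-Hecke operator `π_i` on a standard Young tableau:
`some S` means the result is `S`, `none` means the result is `0`. -/
def searlesStep (i : ℕ) (S : HookT) : Option HookT :=
  if colIdx S i < colIdx S (i + 1) then some S
  else if colIdx S i = colIdx S (i + 1) then none
  else some (hookSwap i (i + 1) S)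

/-- Kim–Yoo's 0-Hecke operator `π_i` on an increasing gapless tableau. -/
def kyStep (i : ℕ) (T : TwoRowT) : Option TwoRowT :=
  if i ∈ T.r1 ∧ i + 1 ∈ T.r2 then
    if i ∉ T.r2 ∧ i + 1 ∉ T.r1 ∧ T.r2.idxOf (i + 1) < T.r1.idxOf i then
      some (twoRowSwap i (i + 1) T)
    else none
  else some T

/-- Searles' operator, extended linearly. -/
noncomputable def piOp (i : ℕ) : (HookT →₀ ℂ) →ₗ[ℂ] (HookT →₀ ℂ) :=
  Finsupp.lsum ℂ fun S => (searlesStep i S).elim 0 fun S' => Finsupp.lsingle S'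

/-- Kim–Yoo's operator, extended linearly. -/
noncomputable def kyOp (i : ℕ) : (TwoRowT →₀ ℂ) →ₗ[ℂ] (TwoRowT →₀ ℂ) :=
  Finsupp.lsum ℂ fun T => (kyStep i T).elim 0 fun T' => Finsupp.lsingle T'

/-- The data of the boxes occupied by repeated entries: for each repeated entry `i`,
the pair of (0-based) columns of its occurrence in row 1 and in row 2.
For two-row shapes this datum determines the pair `(Γ_i(T), T⁻¹(i))`. -/
def repPairs (T : TwoRowT) : Set (ℕ × ℕ) :=
  {p | ∃ i, i ∈ T.r1 ∧ i ∈ T.r2 ∧ p = (T.r1.idxOf i, T.r2.idxOf i)}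

/-- The Kim–Yoo equivalence `∼_{λ;m}` on two-row increasing gapless tableaux. -/
def equivKY (T1 T2 : TwoRowT) : Prop := repPairs T1 = repPairs T2

/-- The equivalence class of `T` in `IGLT(λ)_m` under `∼_{λ;m}`. -/
def classOf (l1 l2 m : ℕ) (T : TwoRowT) : Set TwoRowT :=
  {T' | IsIGLT l1 l2 m T' ∧ equivKY T T'}

/-- The columns (0-based) of the bottommost boxes of the repeated entries,
listed in increasing order of the repeated entries. -/
def botCols (T : TwoRowT) : List ℕ :=
  (T.r1.filter (fun x => x ∈ T.r2)).map (fun i => T.r2.idxOf i)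

/-- The partial order `⪯` on equivalence classes. -/
def classLE (C1 C2 : Set TwoRowT) : Prop :=
  ∃ T1 ∈ C1, ∃ T2 ∈ C2, List.Forall₂ (· ≤ ·) (botCols T1) (botCols T2)

open Classical in
/-- The fundamental quasisymmetric function `F_{comp(D)}` of degree `m`,
as a formal power series in the variables `x_0, x_1, x_2, ...`. -/
noncomputable def Fqs (m : ℕ) (D : Finset ℕ) : MvPowerSeries ℕ ℚ :=
  fun e =>
    if ∃ f : Fin m → ℕ, Monotone f ∧
        (∀ j : ℕ, ∀ hj : j < m, 0 < j → j ∈ D → f ⟨j - 1, by omega⟩ < f ⟨j, hj⟩) ∧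
        (∀ i : ℕ, e i = Nat.card {j : Fin m // f j = i})
    then 1 else 0

/-- The Schur function `s_μ = Σ_{S ∈ SYT(μ)} F_{comp(Des(S))}` (for shapes
representable as hook-plus tableaux). -/
noncomputable def schurF (m : ℕ) (μ : List ℕ) : MvPowerSeries ℕ ℚ :=
  ∑ᶠ S ∈ {S : HookT | IsSYTHook m S ∧ shapeOf S = μ}, Fqs m (desS m S)

lemma cntP_split (l : List ℕ) (p : ℕ → Bool) (i : ℕ) :
    l.countP (fun y => decide (y < i+1) && p y) =
      l.countP (fun y => decide (y < i) && p y) +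
      l.countP (fun y => decide (y = i) && p y) := by
  induction l with
  | nil => simp
  | cons a t ih =>
    simp only [List.countP_cons, ih]
    by_cases hp : p a = true <;> simp [hp] <;> split_ifs <;> omega

lemma cntP_compl (l : List ℕ) (p : ℕ → Bool) (S : List ℕ) :
    l.countP p = l.countP (fun y => p y && decide (y ∈ S)) +
      l.countP (fun y => p y && decide (y ∉ S)) := by
  induction l with
  | nil => simp
  | cons a t ih =>
    simp only [List.countP_cons, ih]
    by_cases hp : p a <;> by_cases hs : a ∈ S <;> simp [hp, hs] <;> omega

lemma cntP_single_one (l : List ℕ) (hn : l.Nodup) (p : ℕ → Bool) (i : ℕ)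
    (hi : i ∈ l) (hp : p i = true) :
    l.countP (fun y => decide (y = i) && p y) = 1 := by
  have h1 : l.countP (fun y => decide (y = i) && p y) = l.countP (fun y => decide (y = i)) := by
    apply List.countP_congr
    intro x _
    by_cases hx : x = i <;> simp [hx, hp]
  rw [h1]
  have h2 : l.count i = l.countP (fun y => decide (y = i)) := by
    rw [List.count_eq_countP]
    exact List.countP_congr (fun x _ => by simp)
  rw [← h2]
  exact List.count_eq_one_of_mem hn hi

lemma idx_eq_countP : ∀ (l : List ℕ), l.Pairwise (· < ·) → ∀ x ∈ l,
    l.idxOf x = l.countP (fun y => decide (y < x))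
  | [], _, x, hx => by simp at hx
  | a :: t, hl, x, hx => by
    rw [List.pairwise_cons] at hl
    by_cases hxa : x = a
    · subst hxa
      rw [List.idxOf_cons_self]
      symm
      rw [List.countP_cons]
      simp only [decide_eq_true_eq, Nat.lt_irrefl, if_false]
      have : t.countP (fun y => decide (y < x)) = 0 :=
        List.countP_eq_zero.mpr (fun y hy => by simpa using Nat.le_of_lt (hl.1 y hy))
      simp [this]
    · have hxt : x ∈ t := by rcases List.mem_cons.mp hx with h|h; exact absurd h hxa; exact h
      have hax : a < x := hl.1 x hxt
      rw [List.idxOf_cons_ne _ (by exact fun h => hxa h.symm),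
        idx_eq_countP t hl.2 x hxt, List.countP_cons]
      simp [hax]

lemma pw_le {l : List ℕ} (hl : l.Pairwise (· < ·)) {a b : ℕ} (hb : b < l.length) (h : a ≤ b) :
    l[a]'(lt_of_le_of_lt h hb) ≤ l[b] := by
  rcases Nat.eq_or_lt_of_le h with rfl|h'
  · exact le_rfl
  · exact le_of_lt ((List.pairwise_iff_getElem.mp hl) a b _ hb h')

lemma pw_reflect {l : List ℕ} (hl : l.Pairwise (· < ·)) {a b : ℕ}
    (ha : a < l.length) (hb : b < l.length) (h : l[a] < l[b]) : a < b := by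
  by_contra hc
  exact absurd (pw_le hl ha (Nat.le_of_not_lt hc)) (by omega)

lemma countP_ge_of_getElem {l : List ℕ} (hl : l.Pairwise (· < ·)) {j : ℕ} (hj : j < l.length)
    {i : ℕ} (h : l[j] < i) : j + 1 ≤ l.countP (fun y => decide (y < i)) := by
  have h1 : l.take (j+1) ++ l.drop (j+1) = l := List.take_append_drop _ _
  have h2 : (l.take (j+1)).countP (fun y => decide (y < i)) = (l.take (j+1)).length := by
    apply List.countP_eq_length.mpr
    intro a ha
    obtain ⟨k, hk, rfl⟩ := List.mem_iff_getElem.mp ha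
    rw [List.getElem_take]
    have hk' : k ≤ j := by
      have := hk; rw [List.length_take] at this; omega
    simp only [decide_eq_true_eq]
    exact lt_of_le_of_lt (pw_le hl hj hk') h
  have h3 : (l.take (j+1)).length = j+1 := by rw [List.length_take]; omega
  calc j + 1 = (l.take (j+1)).countP (fun y => decide (y < i)) := by rw [h2, h3]
  _ ≤ _ := by
    conv_rhs => rw [← h1]
    rw [List.countP_append]; omega

lemma le_getLast {l : List ℕ} (hl : l.Pairwise (· < ·)) {x : ℕ} (hx : x ∈ l) (h0 : l ≠ []) :
    x ≤ l.getLast h0 := by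
  obtain ⟨k, hk, rfl⟩ := List.mem_iff_getElem.mp hx
  rw [List.getLast_eq_getElem]
  exact pw_le hl (by omega) (by omega)

lemma head_le {l : List ℕ} (hl : l.Pairwise (· < ·)) {x : ℕ} (hx : x ∈ l) (h0 : 0 < l.length) :
    l[0] ≤ x := by
  obtain ⟨k, hk, rfl⟩ := List.mem_iff_getElem.mp hx
  exact pw_le hl hk (Nat.zero_le k)

lemma countP_eq_of_mem_iff {l₁ l₂ : List ℕ} (h₁ : l₁.Nodup) (h₂ : l₂.Nodup) (p : ℕ → Bool)
    (h : ∀ x, p x = true → (x ∈ l₁ ↔ x ∈ l₂)) : l₁.countP p = l₂.countP p := by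
  rw [List.countP_eq_length_filter, List.countP_eq_length_filter]
  refine List.Perm.length_eq ?_
  rw [List.perm_ext_iff_of_nodup (List.Nodup.filter _ h₁) (List.Nodup.filter _ h₂)]
  intro a
  simp only [List.mem_filter]
  constructor
  · rintro ⟨ha, hpa⟩; exact ⟨(h a hpa).mp ha, hpa⟩
  · rintro ⟨ha, hpa⟩; exact ⟨(h a hpa).mpr ha, hpa⟩

lemma countP_filterMap_pair (c : ℕ → Prop) [DecidablePred c] (q : ℕ → Bool) :
    ∀ (Z : List (ℕ × ℕ)),
      (Z.filterMap (fun pr => if c pr.1 then some pr.2 else none)).countP q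
        = Z.countP (fun pr => decide (c pr.1) && q pr.2)
  | [] => by simp
  | pr :: Z => by
    by_cases hc : c pr.1 <;>
      simp [List.filterMap_cons, hc, List.countP_cons, countP_filterMap_pair c q Z]

lemma filterMap_pair_sublist (c : ℕ → Prop) [DecidablePred c] :
    ∀ (Z : List (ℕ × ℕ)),
      (Z.filterMap (fun pr => if c pr.1 then some pr.2 else none)).Sublist (Z.map Prod.snd)
  | [] => by simp
  | pr :: Z => by
    by_cases hc : c pr.1
    · simpa [List.filterMap_cons, hc] using (filterMap_pair_sublist c Z).cons₂ pr.2
    · simpa [List.filterMap_cons, hc] using (filterMap_pair_sublist c Z).cons pr.2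

lemma zip_fst_countP (c : ℕ → Bool) : ∀ (l : List ℕ),
    ((l.zip l.tail).countP (fun pr => c pr.1)) = l.dropLast.countP c
  | [] => by simp
  | [a] => by simp
  | a :: b :: t => by
    have ih := zip_fst_countP c (b :: t)
    simp only [List.tail_cons, List.zip_cons_cons, List.countP_cons, List.dropLast_cons₂] at ih ⊢
    omega

lemma mem_zip_tail {l : List ℕ} {pr : ℕ × ℕ} (h : pr ∈ l.zip l.tail) :
    ∃ j, ∃ hj : j + 1 < l.length, pr.1 = l[j]'(by omega) ∧ pr.2 = l[j+1] := by
  obtain ⟨j, hj, hpr⟩ := List.mem_iff_getElem.mp h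
  have hlen : (l.zip l.tail).length = min l.length l.tail.length := List.length_zip
  have hjt : j < l.tail.length := by omega
  have hj' : j + 1 < l.length := by
    have := l.length_tail; omega
  refine ⟨j, hj', ?_, ?_⟩
  · rw [← hpr, List.getElem_zip]
  · rw [← hpr, List.getElem_zip]
    simp [List.getElem_tail]

lemma zip_tail_mem {l : List ℕ} {j : ℕ} (hj : j + 1 < l.length) :
    (l[j]'(by omega), l[j+1]) ∈ l.zip l.tail := by
  apply List.mem_iff_getElem.mpr
  have hlen : (l.zip l.tail).length = min l.length l.tail.length := List.length_zip
  have ht : l.tail.length = l.length - 1 := l.length_tail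
  refine ⟨j, by omega, ?_⟩
  rw [List.getElem_zip]
  simp [List.getElem_tail]

lemma mem_setA {T : TwoRowT} {x : ℕ} : x ∈ setA T ↔ x ∈ T.r1 ∧ x ∈ T.r2 := by
  simp [setA]

lemma setB_sublist_tail (T : TwoRowT) : (setB T).Sublist T.r2.tail := by
  have h := filterMap_pair_sublist (fun x => x ∈ setA T) (T.r2.zip T.r2.tail)
  have h2 : (T.r2.zip T.r2.tail).map Prod.snd = T.r2.tail :=
    List.map_snd_zip (by rw [T.r2.length_tail]; omega)
  rw [h2] at h
  exact h

lemma setB_sub_r2 {T : TwoRowT} {y : ℕ} (h : y ∈ setB T) : y ∈ T.r2 :=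
  List.mem_of_mem_tail ((setB_sublist_tail T).mem h)

lemma mem_setB {T : TwoRowT} {y : ℕ} :
    y ∈ setB T ↔ ∃ j, ∃ hj : j + 1 < T.r2.length,
      T.r2[j]'(by omega) ∈ setA T ∧ T.r2[j+1] = y := by
  constructor
  · intro h
    obtain ⟨pr, hpr, hif⟩ := List.mem_filterMap.mp h
    by_cases hA : pr.1 ∈ setA T
    · rw [if_pos hA] at hif
      obtain ⟨j, hj, h1, h2⟩ := mem_zip_tail hpr
      exact ⟨j, hj, by rw [← h1]; exact hA,
        by rw [← h2]; exact Option.some_injective _ hif⟩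
    · rw [if_neg hA] at hif; cases hif
  · rintro ⟨j, hj, hA, hEq⟩
    exact List.mem_filterMap.mpr
      ⟨(T.r2[j]'(by omega), T.r2[j+1]), zip_tail_mem hj, by rw [if_pos hA, hEq]⟩

/-- The first entry of the second row is never in `B`. -/
lemma head_not_mem_setB {T : TwoRowT} (hp2 : T.r2.Pairwise (· < ·)) (h0 : 0 < T.r2.length) :
    T.r2[0] ∉ setB T := by
  intro h
  obtain ⟨j, hj, _, hEq⟩ := mem_setB.mp h
  have := (List.pairwise_iff_getElem.mp hp2) 0 (j+1) h0 hj (by omega)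
  omega

/-- If `i ∈ r2`, `i ∉ A`, `i+1 ∈ r2`, then `i+1 ∉ B`. -/
lemma succ_not_mem_setB {T : TwoRowT} (hp2 : T.r2.Pairwise (· < ·)) {i : ℕ}
    (hi : i ∈ T.r2) (hiA : i ∉ setA T) (hi1 : i + 1 ∈ T.r2) : i + 1 ∉ setB T := by
  intro h
  obtain ⟨j, hj, hA, hEq⟩ := mem_setB.mp h
  obtain ⟨q, hq, hqi⟩ := List.mem_iff_getElem.mp hi
  have h1 : q < j + 1 := pw_reflect hp2 hq hj (by omega)
  have h2 : T.r2[q] ≤ T.r2[j]'(by omega) := pw_le hp2 (by omega) (by omega)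
  have h3 : T.r2[j]'(by omega) < T.r2[j+1] :=
    (List.pairwise_iff_getElem.mp hp2) j (j+1) (by omega) hj (by omega)
  have h4 : T.r2[j]'(by omega) = i := by omega
  rw [h4] at hA
  exact hiA hA

/-- KEY 1: if `i ∈ r2`, the number of entries `< i` in row 2 is strictly smaller
than the number of entries `< i` in row 1. -/
lemma key1 {T : TwoRowT} {l1 l2 : ℕ} (hlen1 : T.r1.length = l1) (hlen2 : T.r2.length = l2)
    (h12 : l2 ≤ l1) (hp1 : T.r1.Pairwise (· < ·)) (hp2 : T.r2.Pairwise (· < ·))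
    (hcol : ∀ j, j < l2 → T.r1.getD j 0 < T.r2.getD j 0) {i : ℕ} (hi : i ∈ T.r2) :
    T.r2.countP (fun y => decide (y < i)) < T.r1.countP (fun y => decide (y < i)) := by
  obtain ⟨q, hq, hqi⟩ := List.mem_iff_getElem.mp hi
  have hq1 : q < T.r1.length := by omega
  have hgd := hcol q (by omega)
  rw [List.getD_eq_getElem _ _ hq1, List.getD_eq_getElem _ _ hq] at hgd
  have h1 : T.r2.countP (fun y => decide (y < i)) = q := by
    rw [← idx_eq_countP _ hp2 i hi]
    have : T.r2.idxOf (T.r2[q]) = q := List.Nodup.idxOf_getElem hp2.nodup _ _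
    rw [← hqi, this]
  have h2 := countP_ge_of_getElem hp1 hq1 (i := i) (by omega)
  omega

/-- KEY 2: if `i ∈ r2` and `i ∉ B`, then the number of `B`-entries `< i` (counted in row 2)
equals the number of `A`-entries `< i` (counted in row 1). -/
lemma key2 {T : TwoRowT} (hp1 : T.r1.Pairwise (· < ·)) (hp2 : T.r2.Pairwise (· < ·))
    {i : ℕ} (hi : i ∈ T.r2) (hiB : i ∉ setB T) :
    T.r2.countP (fun y => decide (y < i) && decide (y ∈ setB T)) =
      T.r1.countP (fun y => decide (y < i) && decide (y ∈ setA T)) := by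
  have hnd1 : T.r1.Nodup := hp1.nodup
  have hnd2 : T.r2.Nodup := hp2.nodup
  have hndB : (setB T).Nodup := (setB_sublist_tail T).nodup (hnd2.sublist (List.tail_sublist _))
  -- Step 1: count over r2 = count over B
  have s1 : T.r2.countP (fun y => decide (y < i) && decide (y ∈ setB T)) =
      (setB T).countP (fun y => decide (y < i) && decide (y ∈ setB T)) := by
    apply countP_eq_of_mem_iff hnd2 hndB
    intro x hx
    simp only [Bool.and_eq_true, decide_eq_true_eq] at hx
    exact ⟨fun _ => hx.2, fun h => setB_sub_r2 h⟩
  have s1' : (setB T).countP (fun y => decide (y < i) && decide (y ∈ setB T)) =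
      (setB T).countP (fun y => decide (y < i)) := by
    apply List.countP_congr
    intro x hx
    simp [hx]
  -- Step 2: count over B = count over zip
  have s2 : (setB T).countP (fun y => decide (y < i)) =
      (T.r2.zip T.r2.tail).countP (fun pr => decide (pr.1 ∈ setA T) && decide (pr.2 < i)) :=
    countP_filterMap_pair _ _ _
  -- Step 3: replace pr.2 < i by pr.1 < i
  have s3 : (T.r2.zip T.r2.tail).countP (fun pr => decide (pr.1 ∈ setA T) && decide (pr.2 < i)) =
      (T.r2.zip T.r2.tail).countP (fun pr => decide (pr.1 < i) && decide (pr.1 ∈ setA T)) := by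
    apply List.countP_congr
    intro pr hpr
    obtain ⟨j, hj, h1, h2⟩ := mem_zip_tail hpr
    simp only [Bool.and_eq_true, decide_eq_true_eq]
    constructor
    · rintro ⟨hA, hlt⟩
      refine ⟨?_, hA⟩
      have : T.r2[j]'(by omega) < T.r2[j+1] :=
        (List.pairwise_iff_getElem.mp hp2) j (j+1) (by omega) hj (by omega)
      omega
    · rintro ⟨hlt, hA⟩
      refine ⟨hA, ?_⟩
      obtain ⟨q, hq, hqi⟩ := List.mem_iff_getElem.mp hi
      have hjq : j < q := pw_reflect hp2 (by omega) hq (by omega)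
      have hle : T.r2[j+1] ≤ T.r2[q] := pw_le hp2 hq (by omega)
      rcases Nat.lt_or_ge pr.2 i with h | h
      · exact h
      · exfalso
        have h4 : T.r2[j+1] = i := by omega
        exact hiB (mem_setB.mpr ⟨j, hj, by rw [← h1]; exact ‹pr.1 ∈ setA T›, h4⟩)
  -- Step 4: count over zip = count over dropLast
  have s4 : (T.r2.zip T.r2.tail).countP (fun pr => decide (pr.1 < i) && decide (pr.1 ∈ setA T)) =
      T.r2.dropLast.countP (fun y => decide (y < i) && decide (y ∈ setA T)) :=
    zip_fst_countP (fun y => decide (y < i) && decide (y ∈ setA T)) T.r2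
  -- Step 5: count over dropLast = count over r2
  have hr2ne : T.r2 ≠ [] := List.ne_nil_of_mem hi
  have s5 : T.r2.dropLast.countP (fun y => decide (y < i) && decide (y ∈ setA T)) =
      T.r2.countP (fun y => decide (y < i) && decide (y ∈ setA T)) := by
    conv_rhs => rw [← List.dropLast_append_getLast hr2ne]
    rw [List.countP_append]
    have : i ≤ T.r2.getLast hr2ne := le_getLast hp2 hi hr2ne
    simp only [List.countP_cons, List.countP_nil]
    have hlast : ¬ (T.r2.getLast hr2ne < i) := by omega
    simp [hlast]
  -- Step 6: count over r2 = count over r1 (both count A-elements < i)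
  have s6 : T.r2.countP (fun y => decide (y < i) && decide (y ∈ setA T)) =
      T.r1.countP (fun y => decide (y < i) && decide (y ∈ setA T)) := by
    apply countP_eq_of_mem_iff hnd2 hnd1
    intro x hx
    simp only [Bool.and_eq_true, decide_eq_true_eq] at hx
    have := mem_setA.mp hx.2
    exact ⟨fun _ => this.1, fun _ => this.2⟩
  omega

lemma colIdx_Phi_r1 {T : TwoRowT} (hp1 : T.r1.Pairwise (· < ·)) {x : ℕ}
    (hx : x ∈ T.r1) (hxA : x ∉ setA T) :
    colIdx (Phi T) x = T.r1.countP (fun y => decide (y < x) && decide (y ∉ setA T)) := by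
  have hmem : x ∈ T.r1.filter (fun y => decide (y ∉ setA T)) :=
    List.mem_filter.mpr ⟨hx, by simpa using hxA⟩
  have hpf := hp1.filter (fun y => decide (y ∉ setA T))
  have h : colIdx (Phi T) x = (T.r1.filter (fun y => decide (y ∉ setA T))).idxOf x := by
    simp only [colIdx, Phi]
    exact if_pos hmem
  rw [h, idx_eq_countP _ hpf x hmem, List.countP_filter]

lemma colIdx_Phi_r2 {T : TwoRowT} (hp2 : T.r2.Pairwise (· < ·)) {x : ℕ}
    (hx : x ∈ T.r2) (hxB : x ∉ setB T) (hx1 : x ∈ T.r1 → x ∈ setA T) :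
    colIdx (Phi T) x = T.r2.countP (fun y => decide (y < x) && decide (y ∉ setB T)) := by
  have hnot1 : x ∉ T.r1.filter (fun y => decide (y ∉ setA T)) := by
    intro h
    obtain ⟨ha, hb⟩ := List.mem_filter.mp h
    simp only [decide_eq_true_eq] at hb
    exact hb (hx1 ha)
  have hmem : x ∈ T.r2.filter (fun y => decide (y ∉ setB T)) :=
    List.mem_filter.mpr ⟨hx, by simpa using hxB⟩
  have hpf := hp2.filter (fun y => decide (y ∉ setB T))
  have h : colIdx (Phi T) x = (T.r2.filter (fun y => decide (y ∉ setB T))).idxOf x := by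
    simp only [colIdx, Phi]
    exact (if_neg hnot1).trans (if_pos hmem)
  rw [h, idx_eq_countP _ hpf x hmem, List.countP_filter]

lemma colIdx_Phi_zero {T : TwoRowT} {x : ℕ}
    (hxB : x ∈ setB T) (hx1 : x ∈ T.r1 → x ∈ setA T) :
    colIdx (Phi T) x = 0 := by
  have hnot1 : x ∉ T.r1.filter (fun y => decide (y ∉ setA T)) := by
    intro h
    obtain ⟨ha, hb⟩ := List.mem_filter.mp h
    simp only [decide_eq_true_eq] at hb
    exact hb (hx1 ha)
  have hnot2 : x ∉ T.r2.filter (fun y => decide (y ∉ setB T)) := by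
    intro h
    obtain ⟨_, hb⟩ := List.mem_filter.mp h
    simp only [decide_eq_true_eq] at hb
    exact hb hxB
  simp only [colIdx, Phi]
  exact (if_neg hnot1).trans (if_neg hnot2)

/-- The main counting inequality for the case `i ∈ r2`, `i ∉ B`, and the target entry
`i+1` lives in row 1 of `Φ(T)`. -/
lemma main_ineq {T : TwoRowT} {l1 l2 : ℕ} (hlen1 : T.r1.length = l1) (hlen2 : T.r2.length = l2)
    (h12 : l2 ≤ l1) (hp1 : T.r1.Pairwise (· < ·)) (hp2 : T.r2.Pairwise (· < ·))
    (hcol : ∀ j, j < l2 → T.r1.getD j 0 < T.r2.getD j 0)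
    {i : ℕ} (hi : i ∈ T.r2) (hiB : i ∉ setB T) :
    T.r2.countP (fun y => decide (y < i) && decide (y ∉ setB T)) <
      T.r1.countP (fun y => decide (y < i+1) && decide (y ∉ setA T)) := by
  have e1 := cntP_compl T.r2 (fun y => decide (y < i)) (setB T)
  have e2 := cntP_compl T.r1 (fun y => decide (y < i)) (setA T)
  have e3 := key2 hp1 hp2 hi hiB
  have e4 := key1 hlen1 hlen2 h12 hp1 hp2 hcol hi
  have e5 := cntP_split T.r1 (fun y => decide (y ∉ setA T)) i
  have e6 := cntP_compl T.r2 (fun y => decide (y < i)) (setB T)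
  -- normalize the B/A conjunct order in e1 e2 to match e3
  have e1' : T.r2.countP (fun y => decide (y < i)) =
      T.r2.countP (fun y => decide (y < i) && decide (y ∈ setB T)) +
      T.r2.countP (fun y => decide (y < i) && decide (y ∉ setB T)) := e1
  have e2' : T.r1.countP (fun y => decide (y < i)) =
      T.r1.countP (fun y => decide (y < i) && decide (y ∈ setA T)) +
      T.r1.countP (fun y => decide (y < i) && decide (y ∉ setA T)) := e2
  have e5' : T.r1.countP (fun y => decide (y < i+1) && decide (y ∉ setA T)) =
      T.r1.countP (fun y => decide (y < i) && decide (y ∉ setA T)) +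
      T.r1.countP (fun y => decide (y = i) && decide (y ∉ setA T)) := e5
  omega

/-- If `i` is not a descent of `T ∈ IGLT(λ)_m` (for a two-row tableau, this means it is
not the case that `i` occurs in row 1 and `i+1` in row 2), then in the standard Young
tableau `Φ_{λ;m}(T)`, the entry `i` lies strictly to the left of `i+1`; hence
`π_i · Φ_{λ;m}(T) = Φ_{λ;m}(T)` under Searles' 0-Hecke action. -/
theorem stmt_9 (l1 l2 n m : ℕ) (h2 : 1 ≤ l2) (h12 : l2 ≤ l1) (hn : n = l1 + l2)
    (T : TwoRowT) (hT : IsIGLT l1 l2 m T)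
    (i : ℕ) (hi1 : 1 ≤ i) (hi2 : i < m)
    (hnd : ¬ (i ∈ T.r1 ∧ i + 1 ∈ T.r2)) :
    colIdx (Phi T) i < colIdx (Phi T) (i + 1) ∧
    searlesStep i (Phi T) = some (Phi T) := by
  obtain ⟨hlen1, hlen2, hch1, hch2, hcol, hb1, hb2, hgap, hmm⟩ := hT
  have hp1 : T.r1.Pairwise (· < ·) := List.isChain_iff_pairwise.mp hch1
  have hp2 : T.r2.Pairwise (· < ·) := List.isChain_iff_pairwise.mp hch2
  have hnd1 : T.r1.Nodup := hp1.nodup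
  have hnd2 : T.r2.Nodup := hp2.nodup
  have hl1pos : 0 < T.r1.length := by omega
  have hl2pos : 0 < T.r2.length := by omega
  have hcol0 : T.r1[0] < T.r2[0] := by
    have := hcol 0 (by omega)
    rwa [List.getD_eq_getElem _ _ hl1pos, List.getD_eq_getElem _ _ hl2pos] at this
  have hr10A : T.r1[0] ∉ setA T := by
    intro h
    obtain ⟨_, h2⟩ := mem_setA.mp h
    exact absurd (head_le hp2 h2 hl2pos) (by omega)
  suffices hlt : colIdx (Phi T) i < colIdx (Phi T) (i+1) by
    refine ⟨hlt, ?_⟩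
    simp only [searlesStep]
    rw [if_pos hlt]
  have him : i ∈ T.r1 ∨ i ∈ T.r2 := hgap i hi1 (by omega)
  have hi1mem : i+1 ∈ T.r1 ∨ i+1 ∈ T.r2 := hgap (i+1) (by omega) (by omega)
  by_cases hBi : i ∈ setB T
  · -- `i` sits in the column of `Φ(T)`, so its column index is `0`
    have hir2 : i ∈ T.r2 := setB_sub_r2 hBi
    have hir1A : i ∈ T.r1 → i ∈ setA T := fun h => mem_setA.mpr ⟨h, hir2⟩
    rw [colIdx_Phi_zero hBi hir1A]
    have h0le : T.r2[0] ≤ i := head_le hp2 hir2 hl2pos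
    by_cases hr2 : i+1 ∈ T.r2
    · have hir1 : i ∉ T.r1 := fun h => hnd ⟨h, hr2⟩
      have hiA : i ∉ setA T := fun h => hir1 (mem_setA.mp h).1
      have hi1B : i+1 ∉ setB T := succ_not_mem_setB hp2 hir2 hiA hr2
      have hi1r1A : i+1 ∈ T.r1 → i+1 ∈ setA T := fun h => mem_setA.mpr ⟨h, hr2⟩
      rw [colIdx_Phi_r2 hp2 hr2 hi1B hi1r1A]
      refine List.countP_pos_iff.mpr ⟨T.r2[0], List.getElem_mem _, ?_⟩
      have h0B := head_not_mem_setB hp2 hl2pos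
      simp only [Bool.and_eq_true, decide_eq_true_eq]
      exact ⟨by omega, h0B⟩
    · have hr1 : i+1 ∈ T.r1 := hi1mem.resolve_right hr2
      have hi1A : i+1 ∉ setA T := fun h => hr2 (mem_setA.mp h).2
      rw [colIdx_Phi_r1 hp1 hr1 hi1A]
      refine List.countP_pos_iff.mpr ⟨T.r1[0], List.getElem_mem _, ?_⟩
      simp only [Bool.and_eq_true, decide_eq_true_eq]
      exact ⟨by omega, hr10A⟩
  · by_cases h1 : i ∈ T.r1
    · have hr2i1 : i+1 ∉ T.r2 := fun h => hnd ⟨h1, h⟩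
      have hr1i1 : i+1 ∈ T.r1 := hi1mem.resolve_right hr2i1
      have hAi1 : i+1 ∉ setA T := fun h => hr2i1 (mem_setA.mp h).2
      rw [colIdx_Phi_r1 hp1 hr1i1 hAi1]
      by_cases h2 : i ∈ T.r2
      · -- `i` is a repeated entry, so it sits in row 2 of `Φ(T)`
        have hAi : i ∈ setA T := mem_setA.mpr ⟨h1, h2⟩
        rw [colIdx_Phi_r2 hp2 h2 hBi (fun _ => hAi)]
        exact main_ineq hlen1 hlen2 h12 hp1 hp2 hcol h2 hBi
      · -- both `i` and `i+1` stay in row 1 of `Φ(T)`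
        have hAi : i ∉ setA T := fun h => h2 (mem_setA.mp h).2
        rw [colIdx_Phi_r1 hp1 h1 hAi]
        have hsplit : T.r1.countP (fun y => decide (y < i+1) && decide (y ∉ setA T)) =
            T.r1.countP (fun y => decide (y < i) && decide (y ∉ setA T)) +
            T.r1.countP (fun y => decide (y = i) && decide (y ∉ setA T)) :=
          cntP_split T.r1 (fun y => decide (y ∉ setA T)) i
        have hone : T.r1.countP (fun y => decide (y = i) && decide (y ∉ setA T)) = 1 :=
          cntP_single_one T.r1 hnd1 (fun y => decide (y ∉ setA T)) i h1 (by simpa using hAi)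
        omega
    · have h2 : i ∈ T.r2 := him.resolve_left h1
      have hAi : i ∉ setA T := fun h => h1 (mem_setA.mp h).1
      rw [colIdx_Phi_r2 hp2 h2 hBi (fun h => absurd h h1)]
      by_cases hr2 : i+1 ∈ T.r2
      · -- both `i` and `i+1` stay in row 2 of `Φ(T)`
        have hi1B : i+1 ∉ setB T := succ_not_mem_setB hp2 h2 hAi hr2
        have hi1r1A : i+1 ∈ T.r1 → i+1 ∈ setA T := fun h => mem_setA.mpr ⟨h, hr2⟩
        rw [colIdx_Phi_r2 hp2 hr2 hi1B hi1r1A]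
        have hsplit : T.r2.countP (fun y => decide (y < i+1) && decide (y ∉ setB T)) =
            T.r2.countP (fun y => decide (y < i) && decide (y ∉ setB T)) +
            T.r2.countP (fun y => decide (y = i) && decide (y ∉ setB T)) :=
          cntP_split T.r2 (fun y => decide (y ∉ setB T)) i
        have hone : T.r2.countP (fun y => decide (y = i) && decide (y ∉ setB T)) = 1 :=
          cntP_single_one T.r2 hnd2 (fun y => decide (y ∉ setB T)) i h2 (by simpa using hBi)
        omega
      · have hr1 : i+1 ∈ T.r1 := hi1mem.resolve_right hr2
        have hAi1 : i+1 ∉ setA T := fun h => hr2 (mem_setA.mp h).2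
        rw [colIdx_Phi_r1 hp1 hr1 hAi1]
        exact main_ineq hlen1 hlen2 h12 hp1 hp2 hcol h2 hBi
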